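/- Let n ≥ 2, m = n(n−1)/2, B ∈ ℝ^{m×n} the signed vertex-edge incidence matrix of the complete graph on n vertices, S ⊆ {1,…,m}, and r̄(j) ∈ ℝ for each j ∈ S. Define F(w) = Σ_{j ∈ S} ([R(w)]_{j,j} − r̄(j))², where R(w) = B (Bᵀ diag(w) B)⁺ Bᵀ. Then at every w ∈ ℝ^m with strictly positive entries, F is twice differentiable and its Hessian matrix is H_F(w) = −4 [R diag(Δ(w)) R] ∘ R + 2 (R∘R) I_S (R∘R), where R = R(w), ∘ denotes the Hadamard product, Δ(w) ∈ ℝ^m has entries Δ(w)_j = r̄(j) − [R(w)]_{j,j} for j ∈ S and 0 otherwise, and I_S ∈ ℝ^{m×m} is the diagonal matrix with ones at the diagonal entries indexed by S and zeros elsewhere; equivalently, ∂²F/∂w_i ∂w_k = −4 (Σ_j R_{i,j} Δ(w)_j R_{j,k}) R_{i,k} + 2 Σ_{j ∈ S} R_{i,j}² R_{j,k}². -/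

import Mathlib

open Matrix BigOperators Polynomial Filter Topology

/-- The four Penrose conditions characterizing the Moore–Penrose pseudoinverse. -/
def IsMoorePenrose {m k : Type*} [Fintype m] [Fintype k] (M : Matrix m k ℝ)
    (P : Matrix k m ℝ) : Prop :=
  M * P * M = M ∧ P * M * P = P ∧ (M * P)ᵀ = M * P ∧ (P * M)ᵀ = P * M

/- The Moore–Penrose pseudoinverse `M⁺`: it always exists and is unique, so this
choice-based definition picks out exactly the Moore–Penrose pseudoinverse. -/
open Classical in
noncomputable def pinv {m k : Type*} [Fintype m] [Fintype k] (M : Matrix m k ℝ) :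
    Matrix k m ℝ :=
  if h : ∃ P, IsMoorePenrose M P then h.choose else 0

/-- Index type for the unordered pairs `{u,v}`, `u < v`, of vertices of the complete graph
on `n` vertices; there are `n(n-1)/2` of them. -/
abbrev PairIdx (n : ℕ) := {p : Fin n × Fin n // p.1 < p.2}

/-- The signed vertex-edge incidence matrix `B` of the complete graph on `n` vertices:
the row for the pair `{u,v}` (with `u < v`) is `χ_{u,v} = e_u - e_v`. -/
def incB (n : ℕ) : Matrix (PairIdx n) (Fin n) ℝ :=
  Matrix.of fun p i => (if i = p.1.1 then 1 else 0) - (if i = p.1.2 then 1 else 0)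

/-- The entrywise absolute value `|B|` of the incidence matrix `B`. -/
def absB (n : ℕ) : Matrix (PairIdx n) (Fin n) ℝ := (incB n).map fun x => |x|

/-- `L(w) = Bᵀ diag(w) B`, the Laplacian of the weighted graph with edge weights `w`. -/
noncomputable def Lw {n : ℕ} (w : PairIdx n → ℝ) : Matrix (Fin n) (Fin n) ℝ :=
  (incB n)ᵀ * Matrix.diagonal w * incB n

/-- `R(w) = B L(w)⁺ Bᵀ`, whose diagonal entries are the pairwise effective resistances. -/
noncomputable def Rw {n : ℕ} (w : PairIdx n → ℝ) : Matrix (PairIdx n) (PairIdx n) ℝ :=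
  incB n * pinv (Lw w) * (incB n)ᵀ

/-- The least squares objective `F(w) = Σ_{j ∈ S} ([R(w)]_{j,j} - r̄(j))²`. -/
noncomputable def Fobj {n : ℕ} (S : Finset (PairIdx n)) (rbar : PairIdx n → ℝ)
    (w : PairIdx n → ℝ) : ℝ :=
  ∑ j ∈ S, (Rw w j j - rbar j) ^ 2

/-! Adding the projection `J / n` onto the constants turns `L(w)` into a matrix `L(w) + J / n`
that is positive definite for positive weights, and `L(w)⁺ = (L(w) + J / n)⁻¹ - J / n`. Since
`B J = 0`, on the open set where `L(w) + J / n` is invertible `R(w) = B (L(w) + J / n)⁻¹ Bᵀ`,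
which is smooth, and the derivative of matrix inversion gives `∂R_{ab}/∂w_k = -R_{ak} R_{kb}`.
Differentiating `F` twice with the product rule and using the symmetry of `R` gives the Hessian. -/

theorem IsMoorePenrose.unique {m k : Type*} [Fintype m] [Fintype k] {M : Matrix m k ℝ}
    {P Q : Matrix k m ℝ} (hP : IsMoorePenrose M P) (hQ : IsMoorePenrose M Q) : P = Q := by
  obtain ⟨hP1, hP2, hP3, hP4⟩ := hP
  obtain ⟨hQ1, hQ2, hQ3, hQ4⟩ := hQ
  have eMP : M * P = Pᵀ * Mᵀ := by rw [← Matrix.transpose_mul, hP3]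
  have ePM : P * M = Mᵀ * Pᵀ := by rw [← Matrix.transpose_mul, hP4]
  have hMP : M * P = M * Q := by
    calc M * P = Pᵀ * Mᵀ := eMP
      _ = Pᵀ * (Mᵀ * (M * Q)ᵀ) := by rw [← Matrix.transpose_mul (M * Q) M, hQ1]
      _ = (M * P) * (M * Q) := by rw [hQ3, ← Matrix.mul_assoc, ← eMP]
      _ = M * Q := by rw [← Matrix.mul_assoc, hP1]
  have hPM : P * M = Q * M := by
    calc P * M = Mᵀ * Pᵀ := ePM
      _ = ((Q * M)ᵀ * Mᵀ) * Pᵀ := by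
          rw [← Matrix.transpose_mul M (Q * M), ← Matrix.mul_assoc, hQ1]
      _ = (Q * M) * (Mᵀ * Pᵀ) := by rw [hQ4, Matrix.mul_assoc]
      _ = Q * M := by rw [← ePM, Matrix.mul_assoc, ← Matrix.mul_assoc M P M, hP1]
  calc P = P * M * P := hP2.symm
    _ = Q * M * P := by rw [hPM]
    _ = Q * (M * Q) := by rw [Matrix.mul_assoc, hMP]
    _ = Q := by rw [← Matrix.mul_assoc, hQ2]

theorem pinv_eq_of_isMoorePenrose {m k : Type*} [Fintype m] [Fintype k] {M : Matrix m k ℝ}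
    {P : Matrix k m ℝ} (hP : IsMoorePenrose M P) : pinv M = P := by
  have hex : ∃ P, IsMoorePenrose M P := ⟨P, hP⟩
  rw [pinv, dif_pos hex]
  exact hex.choose_spec.unique hP

theorem isMoorePenrose_inv_add_sub {ι : Type*} [Fintype ι] [DecidableEq ι] {L E : Matrix ι ι ℝ}
    (hEt : Eᵀ = E) (hEE : E * E = E) (hLE : L * E = 0) (hEL : E * L = 0)
    (h : IsUnit (L + E).det) :
    IsMoorePenrose L ((L + E)⁻¹ - E) := by
  set M := L + E
  have hL : L = M - E := by simp [M]
  have hME : M * E = E := by simp [M, add_mul, hLE, hEE]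
  have hEM : E * M = E := by simp [M, mul_add, hEL, hEE]
  have hMinvE : M⁻¹ * E = E := by
    rw [← hME, ← Matrix.mul_assoc, Matrix.nonsing_inv_mul _ h, Matrix.one_mul, hME]
  have hEMinv : E * M⁻¹ = E := by
    rw [← hEM, Matrix.mul_assoc, Matrix.mul_nonsing_inv _ h, Matrix.mul_one, hEM]
  have hLP : L * (M⁻¹ - E) = 1 - E := by
    rw [hL, sub_mul, mul_sub, mul_sub, Matrix.mul_nonsing_inv _ h, hME, hEMinv, hEE]; abel
  have hPL : (M⁻¹ - E) * L = 1 - E := by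
    rw [hL, mul_sub, sub_mul, sub_mul, Matrix.nonsing_inv_mul _ h, hMinvE, hEM, hEE]; abel
  have hsym : (1 - E)ᵀ = 1 - E := by rw [Matrix.transpose_sub, Matrix.transpose_one, hEt]
  refine ⟨?_, ?_, by rw [hLP, hsym], by rw [hPL, hsym]⟩
  · rw [hLP, sub_mul, one_mul, hEL, sub_zero]
  · rw [hPL, sub_mul, one_mul, mul_sub, hEMinv, hEE, sub_self, sub_zero]

section Gradient

variable {ι : Type*} [Fintype ι]

noncomputable def dotProductCLM (c : ι → ℝ) : (ι → ℝ) →L[ℝ] ℝ :=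
  ∑ k, c k • (ContinuousLinearMap.proj k : (ι → ℝ) →L[ℝ] ℝ)

theorem dotProductCLM_apply (c v : ι → ℝ) : dotProductCLM c v = ∑ k, c k * v k := by
  simp [dotProductCLM]

@[simp]
theorem dotProductCLM_single [DecidableEq ι] (c : ι → ℝ) (i : ι) :
    dotProductCLM c (Pi.single i 1) = c i := by
  simp [dotProductCLM_apply, Pi.single_apply]

theorem fderiv_fderiv_single_of_gradient [DecidableEq ι] {f : (ι → ℝ) → ℝ}
    {grad : (ι → ℝ) → ι → ℝ} {g' : ι → (ι → ℝ) →L[ℝ] ℝ} {w : ι → ℝ}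
    (hf : ∀ᶠ x in 𝓝 w, HasFDerivAt f (dotProductCLM (grad x)) x)
    (hg : ∀ k, HasFDerivAt (fun x => grad x k) (g' k) w) :
    DifferentiableAt ℝ (fderiv ℝ f) w ∧
      ∀ i k, fderiv ℝ (fderiv ℝ f) w (Pi.single i 1) (Pi.single k 1) = g' k (Pi.single i 1) := by
  have h : HasFDerivAt (fderiv ℝ f)
      (∑ k, (g' k).smulRight (ContinuousLinearMap.proj k : (ι → ℝ) →L[ℝ] ℝ)) w :=
    (HasFDerivAt.fun_sum fun k _ => (hg k).smul_const _).congr_of_eventuallyEq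
      (hf.mono fun _ hx => hx.fderiv)
  refine ⟨h.differentiableAt, fun i k => ?_⟩
  simp [h.fderiv, Pi.single_apply]

end Gradient

theorem IsUnit.hasFDerivAt_ringInverse {𝕜 R : Type*} [NontriviallyNormedField 𝕜] [NormedRing R]
    [HasSummableGeomSeries R] [NormedAlgebra 𝕜 R] {x : R} (hx : IsUnit x) :
    HasFDerivAt Ring.inverse
      (-ContinuousLinearMap.mulLeftRight 𝕜 R (Ring.inverse x) (Ring.inverse x)) x := by
  obtain ⟨u, rfl⟩ := hx
  simpa only [Ring.inverse_unit] using _root_.hasFDerivAt_ringInverse (𝕜 := 𝕜) u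

noncomputable def constProj (n : ℕ) : Matrix (Fin n) (Fin n) ℝ := Matrix.of fun _ _ => (n : ℝ)⁻¹

noncomputable def regLw {n : ℕ} (w : PairIdx n → ℝ) : Matrix (Fin n) (Fin n) ℝ :=
  Lw w + constProj n

theorem constProj_transpose (n : ℕ) : (constProj n)ᵀ = constProj n := by
  ext; simp [constProj]

theorem constProj_mul_self (n : ℕ) : constProj n * constProj n = constProj n := by
  ext i j
  have hn : (n : ℝ) ≠ 0 := by exact_mod_cast (Fin.pos i).ne'
  simp only [constProj, Matrix.mul_apply, Matrix.of_apply, Finset.sum_const, Finset.card_univ,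
    Fintype.card_fin, nsmul_eq_mul]
  field_simp

theorem incB_mul_constProj (n : ℕ) : incB n * constProj n = 0 := by
  ext p j
  simp [incB, constProj, Matrix.mul_apply, sub_mul, Finset.sum_sub_distrib]

theorem Lw_transpose {n : ℕ} (w : PairIdx n → ℝ) : (Lw w)ᵀ = Lw w := by
  simp [Lw, Matrix.transpose_mul, Matrix.mul_assoc]

theorem Lw_mul_constProj {n : ℕ} (w : PairIdx n → ℝ) : Lw w * constProj n = 0 := by
  rw [Lw, Matrix.mul_assoc, incB_mul_constProj, Matrix.mul_zero]

theorem constProj_mul_Lw {n : ℕ} (w : PairIdx n → ℝ) : constProj n * Lw w = 0 := by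
  rw [← Lw_transpose, ← constProj_transpose, ← Matrix.transpose_mul, Lw_mul_constProj,
    Matrix.transpose_zero]

theorem regLw_transpose {n : ℕ} (w : PairIdx n → ℝ) : (regLw w)ᵀ = regLw w := by
  rw [regLw, Matrix.transpose_add, Lw_transpose, constProj_transpose]

theorem dotProduct_Lw_mulVec {n : ℕ} (w : PairIdx n → ℝ) (x : Fin n → ℝ) :
    x ⬝ᵥ (Lw w *ᵥ x) = ∑ p : PairIdx n, w p * (x p.1.1 - x p.1.2) ^ 2 := by
  have hB : ∀ p, (incB n *ᵥ x) p = x p.1.1 - x p.1.2 := fun p => by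
    simp [incB, Matrix.mulVec, dotProduct, sub_mul, Finset.sum_sub_distrib]
  rw [Lw, ← Matrix.mulVec_mulVec, ← Matrix.mulVec_mulVec, Matrix.dotProduct_mulVec,
    Matrix.vecMul_transpose]
  simp only [dotProduct, Matrix.mulVec_diagonal, hB]
  exact Finset.sum_congr rfl fun p _ => by ring

theorem dotProduct_constProj_mulVec (n : ℕ) (x : Fin n → ℝ) :
    x ⬝ᵥ (constProj n *ᵥ x) = (n : ℝ)⁻¹ * (∑ i, x i) ^ 2 := by
  simp only [constProj, Matrix.mulVec, dotProduct, Matrix.of_apply, sq, Finset.mul_sum,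
    Finset.sum_mul]
  exact Finset.sum_congr rfl fun _ _ => Finset.sum_congr rfl fun _ _ => by ring

theorem posDef_regLw {n : ℕ} {w : PairIdx n → ℝ} (hw : ∀ p, 0 < w p) : (regLw w).PosDef := by
  refine .of_dotProduct_mulVec_pos (regLw_transpose w) fun x hx => ?_
  rw [star_trivial, regLw, Matrix.add_mulVec, dotProduct_add, dotProduct_Lw_mulVec,
    dotProduct_constProj_mulVec]
  have hL : 0 ≤ ∑ p : PairIdx n, w p * (x p.1.1 - x p.1.2) ^ 2 :=
    Finset.sum_nonneg fun p _ => mul_nonneg (hw p).le (sq_nonneg _)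
  have hE : 0 ≤ (n : ℝ)⁻¹ * (∑ i, x i) ^ 2 := by positivity
  by_contra! hle
  have hpair : ∀ p : PairIdx n, x p.1.1 = x p.1.2 := fun p => by
    have := (Finset.sum_eq_zero_iff_of_nonneg fun p _ => mul_nonneg (hw p).le
      (sq_nonneg (x p.1.1 - x p.1.2))).1 (by linarith) p (Finset.mem_univ p)
    simpa [(hw p).ne', sub_eq_zero] using this
  obtain ⟨i₀, hi₀⟩ : ∃ i, x i ≠ 0 := Function.ne_iff.1 hx
  have hconst : ∀ i, x i = x i₀ := fun i => by
    rcases lt_trichotomy i i₀ with h | rfl | h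
    · exact hpair ⟨(i, i₀), h⟩
    · rfl
    · exact (hpair ⟨(i₀, i), h⟩).symm
  have hn : (0 : ℝ) < n := by exact_mod_cast Fin.pos i₀
  have : (n : ℝ)⁻¹ * (∑ i, x i) ^ 2 = n * x i₀ ^ 2 := by
    simp only [hconst, Finset.sum_const, Finset.card_univ, Fintype.card_fin, nsmul_eq_mul]
    field_simp
  have : 0 < (n : ℝ) * x i₀ ^ 2 := by positivity
  linarith

theorem isMoorePenrose_Lw {n : ℕ} {w : PairIdx n → ℝ} (hw : IsUnit (regLw w)) :
    IsMoorePenrose (Lw w) ((regLw w)⁻¹ - constProj n) :=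
  isMoorePenrose_inv_add_sub (constProj_transpose n) (constProj_mul_self n) (Lw_mul_constProj w)
    (constProj_mul_Lw w) ((Matrix.isUnit_iff_isUnit_det _).1 hw)

noncomputable def RwReg {n : ℕ} (w : PairIdx n → ℝ) : Matrix (PairIdx n) (PairIdx n) ℝ :=
  incB n * (regLw w)⁻¹ * (incB n)ᵀ

theorem Rw_eq_RwReg {n : ℕ} {w : PairIdx n → ℝ} (hw : IsUnit (regLw w)) : Rw w = RwReg w := by
  rw [Rw, pinv_eq_of_isMoorePenrose (isMoorePenrose_Lw hw), Matrix.mul_sub, Matrix.sub_mul,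
    incB_mul_constProj, Matrix.zero_mul, sub_zero, RwReg]

theorem RwReg_transpose {n : ℕ} (w : PairIdx n → ℝ) : (RwReg w)ᵀ = RwReg w := by
  rw [RwReg, Matrix.transpose_mul, Matrix.transpose_mul, Matrix.transpose_transpose,
    Matrix.transpose_nonsing_inv, regLw_transpose, Matrix.mul_assoc]

section Derivatives

-- Any norm will do: it only serves to differentiate matrix inversion.
attribute [local instance] Matrix.linftyOpNormedRing Matrix.linftyOpNormedAlgebra

variable {n : ℕ}

noncomputable def LwCLM (n : ℕ) : (PairIdx n → ℝ) →L[ℝ] Matrix (Fin n) (Fin n) ℝ :=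
  LinearMap.toContinuousLinearMap <| mulRightLinearMap _ ℝ (incB n) ∘ₗ
    mulLeftLinearMap _ ℝ (incB n)ᵀ ∘ₗ Matrix.diagonalLinearMap _ ℝ ℝ

noncomputable def conjEntryCLM (n : ℕ) (a b : PairIdx n) : Matrix (Fin n) (Fin n) ℝ →L[ℝ] ℝ :=
  LinearMap.toContinuousLinearMap <| Matrix.entryLinearMap ℝ ℝ a b ∘ₗ
    mulRightLinearMap _ ℝ (incB n)ᵀ ∘ₗ mulLeftLinearMap _ ℝ (incB n)

theorem hasFDerivAt_regLw (w : PairIdx n → ℝ) : HasFDerivAt regLw (LwCLM n) w :=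
  (LwCLM n).hasFDerivAt.add_const (x := w) (constProj n)

theorem eventually_isUnit_regLw {w : PairIdx n → ℝ} (hw : IsUnit (regLw w)) :
    ∀ᶠ x in 𝓝 w, IsUnit (regLw x) :=
  (hasFDerivAt_regLw w).continuousAt.eventually_mem (Units.isOpen.mem_nhds hw)

theorem hasFDerivAt_RwReg_apply {w : PairIdx n → ℝ} (hw : IsUnit (regLw w)) (a b : PairIdx n) :
    HasFDerivAt (fun x => RwReg x a b)
      (dotProductCLM fun k => -(RwReg w a k * RwReg w k b)) w := by
  have hinv : HasFDerivAt (fun x => (regLw x)⁻¹)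
      ((-ContinuousLinearMap.mulLeftRight ℝ _ (regLw w)⁻¹ (regLw w)⁻¹).comp (LwCLM n)) w := by
    simp only [Matrix.nonsing_inv_eq_ringInverse]
    exact hw.hasFDerivAt_ringInverse.comp w (hasFDerivAt_regLw w)
  refine ((conjEntryCLM n a b).hasFDerivAt.comp w hinv).congr_fderiv ?_
  ext v
  have hR : incB n * ((regLw w)⁻¹ * ((incB n)ᵀ * Matrix.diagonal v * incB n) * (regLw w)⁻¹) *
      (incB n)ᵀ = RwReg w * Matrix.diagonal v * RwReg w := by
    simp only [RwReg, Matrix.mul_assoc]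
  change (incB n * -((regLw w)⁻¹ * ((incB n)ᵀ * Matrix.diagonal v * incB n) * (regLw w)⁻¹) *
    (incB n)ᵀ) a b = _
  rw [Matrix.mul_neg, Matrix.neg_mul, Matrix.neg_apply, hR, dotProductCLM_apply, Matrix.mul_apply,
    ← Finset.sum_neg_distrib]
  exact Finset.sum_congr rfl fun k _ => by rw [Matrix.mul_diagonal]; ring

end Derivatives

section Objective

variable {n : ℕ} (S : Finset (PairIdx n)) (rbar : PairIdx n → ℝ)

noncomputable def FobjReg (w : PairIdx n → ℝ) : ℝ :=
  ∑ j ∈ S, (RwReg w j j - rbar j) ^ 2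

noncomputable def gradFobjReg (w : PairIdx n → ℝ) (k : PairIdx n) : ℝ :=
  ∑ j ∈ S, -2 * (RwReg w j j - rbar j) * (RwReg w j k * RwReg w k j)

variable {S rbar}

theorem hasFDerivAt_FobjReg {w : PairIdx n → ℝ} (hw : IsUnit (regLw w)) :
    HasFDerivAt (FobjReg S rbar) (dotProductCLM (gradFobjReg S rbar w)) w := by
  have h := HasFDerivAt.fun_sum fun j (_ : j ∈ S) =>
    ((hasFDerivAt_RwReg_apply hw j j).sub_const (rbar j)).pow 2
  refine h.congr_fderiv ?_
  ext v
  simp only [Nat.add_one_sub_one, pow_one, nsmul_eq_mul, Nat.cast_ofNat, _root_.sum_apply,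
    _root_.smul_apply, dotProductCLM_apply, neg_mul, Finset.sum_neg_distrib, smul_eq_mul, mul_neg,
    Finset.mul_sum, gradFobjReg, Finset.sum_mul, neg_inj]
  rw [Finset.sum_comm]
  exact Finset.sum_congr rfl fun _ _ => Finset.sum_congr rfl fun _ _ => by ring

theorem hessian_FobjReg {w : PairIdx n → ℝ} (hw : IsUnit (regLw w)) :
    DifferentiableAt ℝ (fderiv ℝ (FobjReg S rbar)) w ∧
    ∀ i k : PairIdx n,
      fderiv ℝ (fderiv ℝ (FobjReg S rbar)) w (Pi.single i 1) (Pi.single k 1)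
        = -4 * (∑ j, RwReg w i j * (if j ∈ S then rbar j - RwReg w j j else 0) * RwReg w j k)
              * RwReg w i k
          + 2 * ∑ j ∈ S, (RwReg w i j) ^ 2 * (RwReg w j k) ^ 2 := by
  have hR := hasFDerivAt_RwReg_apply hw
  obtain ⟨hdiff, hval⟩ := fderiv_fderiv_single_of_gradient
    ((eventually_isUnit_regLw hw).mono fun x hx => hasFDerivAt_FobjReg (S := S) (rbar := rbar) hx)
    fun k => HasFDerivAt.fun_sum fun j _ =>
      (((hR j j).sub_const (rbar j)).const_mul (-2)).mul ((hR j k).mul (hR k j))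
  refine ⟨hdiff, fun i k => ?_⟩
  have hsymm : ∀ a b, RwReg w a b = RwReg w b a := fun a b => congrFun₂ (RwReg_transpose w) b a
  rw [hval]
  simp only [FunLike.coe_sum, Finset.sum_apply, _root_.add_apply, FunLike.coe_smul,
    Pi.smul_apply, dotProductCLM_single, smul_eq_mul, mul_ite, ite_mul, mul_zero, zero_mul,
    Finset.sum_ite_mem, Finset.univ_inter]
  rw [Finset.mul_sum, Finset.sum_mul, Finset.mul_sum, ← Finset.sum_add_distrib]
  refine Finset.sum_congr rfl fun j _ => ?_
  rw [hsymm j i, hsymm k i, hsymm k j]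
  ring

end Objective

theorem stmt14_general {n : ℕ} (S : Finset (PairIdx n)) (rbar : PairIdx n → ℝ)
    (w : PairIdx n → ℝ) (hw : ∀ i, 0 < w i) :
    DifferentiableAt ℝ (Fobj S rbar) w ∧
    DifferentiableAt ℝ (fderiv ℝ (Fobj S rbar)) w ∧
    ∀ i k : PairIdx n,
      fderiv ℝ (fderiv ℝ (Fobj S rbar)) w (Pi.single i 1) (Pi.single k 1)
        = -4 * (∑ j, Rw w i j * (if j ∈ S then rbar j - Rw w j j else 0) * Rw w j k)
              * Rw w i k
          + 2 * ∑ j ∈ S, (Rw w i j) ^ 2 * (Rw w j k) ^ 2 := by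
  have hU : IsUnit (regLw w) := (posDef_regLw hw).isUnit
  have hF : Fobj S rbar =ᶠ[𝓝 w] FobjReg S rbar :=
    (eventually_isUnit_regLw hU).mono fun x hx => by simp only [Fobj, FobjReg, Rw_eq_RwReg hx]
  obtain ⟨hdiff, hhess⟩ := hessian_FobjReg (S := S) (rbar := rbar) hU
  refine ⟨(hasFDerivAt_FobjReg hU).differentiableAt.congr_of_eventuallyEq hF,
    hdiff.congr_of_eventuallyEq hF.fderiv, fun i k => ?_⟩
  rw [hF.fderiv.fderiv_eq, Rw_eq_RwReg hU]
  exact hhess i k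

/-- At every strictly positive weight vector `w`, the objective `F` is
twice differentiable with Hessian `H_F(w) = -4 [R diag(Δ(w)) R] ∘ R + 2 (R∘R) I_S (R∘R)`,
i.e. `∂²F/∂w_i ∂w_k = -4 (Σ_j R_{i,j} Δ(w)_j R_{j,k}) R_{i,k} + 2 Σ_{j ∈ S} R_{i,j}² R_{j,k}²`,
where `Δ(w)_j = r̄(j) - [R(w)]_{j,j}` for `j ∈ S` and `0` otherwise. -/
theorem stmt14 {n : ℕ} (hn : 2 ≤ n) (S : Finset (PairIdx n)) (rbar : PairIdx n → ℝ)
    (w : PairIdx n → ℝ) (hw : ∀ i, 0 < w i) :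
    DifferentiableAt ℝ (Fobj S rbar) w ∧
    DifferentiableAt ℝ (fderiv ℝ (Fobj S rbar)) w ∧
    ∀ i k : PairIdx n,
      fderiv ℝ (fderiv ℝ (Fobj S rbar)) w (Pi.single i 1) (Pi.single k 1)
        = -4 * (∑ j, Rw w i j * (if j ∈ S then rbar j - Rw w j j else 0) * Rw w j k)
              * Rw w i k
          + 2 * ∑ j ∈ S, (Rw w i j) ^ 2 * (Rw w j k) ^ 2 :=
  stmt14_general S rbar w hw
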